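/- Let λ0 ∈ (−2,2), x_+ = √(4 − λ0²)/2, and define V(t, λ0) = t²/2 + i λ0 t/2 − Log(t − i λ0/2) − (4 − λ0²)/8, where Log is the principal branch of the complex logarithm. Then V(x_+, λ0) = i ( λ0 √(4 − λ0²) / 4 + arcsin(λ0/2) ); in particular Re V(x_+, λ0) = 0. -/

import Mathlib

/-! With `θ = arcsin (λ₀/2) ∈ [-π/2, π/2]` we have `x₊ = cos θ`, so `x₊ - iλ₀/2 = exp (-iθ)`
and its principal logarithm is `-iθ`. The real parts `x₊²/2` and `-(4 - λ₀²)/8` cancel, and the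
imaginary part is `λ₀x₊/2 + θ`. -/

noncomputable section

/-- `V(t, λ₀) = t²/2 + iλ₀t/2 − Log(t − iλ₀/2) − (4 − λ₀²)/8`, with `Log` the principal
branch of the complex logarithm. -/
def Vfun (l0 : ℝ) (t : ℂ) : ℂ :=
  t ^ 2 / 2 + Complex.I * l0 * t / 2 - Complex.log (t - Complex.I * l0 / 2) -
    ((4 - l0 ^ 2) / 8 : ℝ)

/-- The saddle point `x₊ = √(4 − λ₀²)/2`. -/
def xPlus (l0 : ℝ) : ℝ := Real.sqrt (4 - l0 ^ 2) / 2

open Complex in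
theorem Complex.log_sqrt_one_sub_sq_sub_mul_I {x : ℝ} (hx : x ∈ Set.Icc (-1) 1) :
    log (√(1 - x ^ 2) - x * I) = -Real.arcsin x * I := by
  have hexp : √(1 - x ^ 2) - x * I = exp (↑(-Real.arcsin x) * I) := by
    rw [exp_mul_I, ← ofReal_cos, ← ofReal_sin, Real.cos_neg, Real.sin_neg, Real.cos_arcsin,
      Real.sin_arcsin hx.1 hx.2]
    push_cast
    ring
  have := Real.neg_pi_div_two_le_arcsin x
  have := Real.arcsin_le_pi_div_two x
  rw [hexp, log_exp] <;> simp only [ofReal_neg, neg_mul, neg_im, mul_I_im, ofReal_re] <;>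
    linarith [Real.pi_pos]

theorem Real.sqrt_four_sub_sq (a : ℝ) : √(4 - a ^ 2) = 2 * √(1 - (a / 2) ^ 2) := by
  rw [show 4 - a ^ 2 = 2 ^ 2 * (1 - (a / 2) ^ 2) by ring, Real.sqrt_mul (by positivity),
    Real.sqrt_sq zero_le_two]

theorem xPlus_eq_sqrt (l0 : ℝ) : xPlus l0 = √(1 - (l0 / 2) ^ 2) := by
  rw [xPlus, Real.sqrt_four_sub_sq]
  ring

/-- The value of `V` at the saddle point `x₊` is purely imaginary. -/
theorem Vfun_at_saddle (l0 : ℝ) (hl0 : l0 ∈ Set.Ioo (-2 : ℝ) 2) :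
    Vfun l0 (xPlus l0 : ℝ) =
        Complex.I * ((l0 * Real.sqrt (4 - l0 ^ 2) / 4 + Real.arcsin (l0 / 2) : ℝ)) ∧
      (Vfun l0 (xPlus l0 : ℝ)).re = 0 := by
  have hx : l0 / 2 ∈ Set.Icc (-1) 1 := ⟨by linarith [hl0.1], by linarith [hl0.2]⟩
  have hlog : Complex.log ((xPlus l0 : ℂ) - Complex.I * l0 / 2) =
      -Real.arcsin (l0 / 2) * Complex.I := by
    rw [xPlus_eq_sqrt, ← Complex.log_sqrt_one_sub_sq_sub_mul_I hx]
    push_cast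
    ring_nf
  have hsq : (√(1 - (l0 / 2) ^ 2) : ℂ) ^ 2 = 1 - (l0 / 2) ^ 2 := by
    exact_mod_cast Real.sq_sqrt (by nlinarith [hx.1, hx.2])
  have hV : Vfun l0 (xPlus l0 : ℝ) =
      Complex.I * ((l0 * Real.sqrt (4 - l0 ^ 2) / 4 + Real.arcsin (l0 / 2) : ℝ)) := by
    rw [Vfun, hlog, xPlus_eq_sqrt, Real.sqrt_four_sub_sq]
    push_cast
    linear_combination hsq / 2
  exact ⟨hV, by simp [hV]⟩

end
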